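/- arXiv:1805.11570 — 2 statements merged into one kernel-verified Lean document; each statement's English description precedes it below -/
import Mathlib

section
/- Let d ≥ 2 and let 𝒞_d ⊆ M_2(ℝ) be the convex set of real 2×2 matrices Q such that Q V¹_d and Qᵀ V¹_d are entrywise nonnegative and Σ_{i,j=1}^{2} Q_{ij} = 1, where V¹_d = [[1, 1], [−1, (d+1)/(d−1)]]. Then the extreme points of 𝒞_d are exactly the five matrices Q₁ = (1/(2(d+2)))·[[d+1, d+1], [d+1, −(d−1)]], Q₂ = [[1, 0], [0, 0]], Q₃ = (1/4)·[[1, 1], [1, 1]], Q₄ = (1/2)·[[1, 0], [1, 0]], and Q₅ = (1/2)·[[1, 1], [0, 0]]. -/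
open scoped ComplexOrder Kronecker Matrix

namespace TensorDecomp

/-- The Choi matrix of a linear map between matrix algebras. -/
noncomputable def choi {A B : Type} [Fintype A] [DecidableEq A]
    (L : Matrix A A ℂ →ₗ[ℂ] Matrix B B ℂ) : Matrix (A × B) (A × B) ℂ :=
  fun p q => L (Matrix.single p.1 q.1 1) p.2 q.2

/-- A map is positive if it maps positive semidefinite matrices to positive
semidefinite matrices. -/
def IsPositiveMap {A B : Type} [Fintype A] [Fintype B]
    (L : Matrix A A ℂ →ₗ[ℂ] Matrix B B ℂ) : Prop :=
  ∀ X : Matrix A A ℂ, X.PosSemidef → (L X).PosSemidef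

/-- A map is completely positive iff its Choi matrix is positive semidefinite. -/
def IsCompletelyPositive {A B : Type} [Fintype A] [DecidableEq A] [Fintype B]
    (L : Matrix A A ℂ →ₗ[ℂ] Matrix B B ℂ) : Prop :=
  (choi L).PosSemidef

/-- Matrix transposition as a linear map. -/
def transposeMap (A : Type) : Matrix A A ℂ →ₗ[ℂ] Matrix A A ℂ where
  toFun X := X.transpose
  map_add' X Y := Matrix.transpose_add X Y
  map_smul' c X := Matrix.transpose_smul c X

/-- A map is completely copositive iff transposition composed with it is
completely positive. -/
def IsCompletelyCopositive {A B : Type} [Fintype A] [DecidableEq A] [Fintype B]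
    (L : Matrix A A ℂ →ₗ[ℂ] Matrix B B ℂ) : Prop :=
  IsCompletelyPositive (transposeMap B ∘ₗ L)

/-- A map is decomposable iff it is the sum of a completely positive map and the
transposition composed with a completely positive map. -/
def IsDecomposable {A B : Type} [Fintype A] [DecidableEq A] [Fintype B]
    (L : Matrix A A ℂ →ₗ[ℂ] Matrix B B ℂ) : Prop :=
  ∃ T₁ T₂ : Matrix A A ℂ →ₗ[ℂ] Matrix B B ℂ,
    IsCompletelyPositive T₁ ∧ IsCompletelyPositive T₂ ∧ L = T₁ + transposeMap B ∘ₗ T₂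

/-- The tensor product of a finite family of linear maps between matrix algebras,
characterized by `(⊗ₜ L t) (⊗ₜ X t) = ⊗ₜ (L t (X t))`. -/
noncomputable def mapTensorFamily {ι : Type} [Fintype ι] [DecidableEq ι]
    {κ κ' : Type} [Fintype κ] [DecidableEq κ]
    (L : ι → (Matrix κ κ ℂ →ₗ[ℂ] Matrix κ' κ' ℂ)) :
    Matrix (ι → κ) (ι → κ) ℂ →ₗ[ℂ] Matrix (ι → κ') (ι → κ') ℂ where
  toFun X := fun k l => ∑ i : ι → κ, ∑ j : ι → κ,
    X i j * ∏ t, L t (Matrix.single (i t) (j t) 1) (k t) (l t)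
  map_add' X Y := by
    funext k l
    erw [Matrix.add_apply]
    simp [Matrix.add_apply, add_mul, Finset.sum_add_distrib]
  map_smul' c X := by
    funext k l
    erw [Matrix.smul_apply]
    simp [Matrix.smul_apply, smul_eq_mul, Finset.mul_sum, mul_assoc]

/-- The `n`-th tensor power of a linear map between matrix algebras. -/
noncomputable def mapTensorPow {κ κ' : Type} [Fintype κ] [DecidableEq κ]
    (L : Matrix κ κ ℂ →ₗ[ℂ] Matrix κ' κ' ℂ) (n : ℕ) :
    Matrix (Fin n → κ) (Fin n → κ) ℂ →ₗ[ℂ] Matrix (Fin n → κ') (Fin n → κ') ℂ :=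
  mapTensorFamily (fun _ : Fin n => L)

/-- The tensor product of two linear maps between matrix algebras, characterized by
`(L₁ ⊗ L₂)(X ⊗ Y) = L₁(X) ⊗ L₂(Y)`. -/
noncomputable def mapTensor {A B C D : Type} [Fintype A] [DecidableEq A]
    [Fintype C] [DecidableEq C]
    (L₁ : Matrix A A ℂ →ₗ[ℂ] Matrix B B ℂ) (L₂ : Matrix C C ℂ →ₗ[ℂ] Matrix D D ℂ) :
    Matrix (A × C) (A × C) ℂ →ₗ[ℂ] Matrix (B × D) (B × D) ℂ where
  toFun X := fun k l => ∑ i : A × C, ∑ j : A × C,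
    X i j * (L₁ (Matrix.single i.1 j.1 1) k.1 l.1 *
      L₂ (Matrix.single i.2 j.2 1) k.2 l.2)
  map_add' X Y := by
    funext k l
    erw [Matrix.add_apply]
    simp [Matrix.add_apply, add_mul, Finset.sum_add_distrib]
  map_smul' c X := by
    funext k l
    erw [Matrix.smul_apply]
    simp [Matrix.smul_apply, smul_eq_mul, Finset.mul_sum, mul_assoc]

/-- The adjoint of a linear map between matrix algebras with respect to the
Hilbert-Schmidt inner product `⟨A, B⟩ = Tr[Aᴴ B]`. -/
noncomputable def hsAdjoint {A B : Type} [Fintype A] [DecidableEq A] [Fintype B]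
    (T : Matrix A A ℂ →ₗ[ℂ] Matrix B B ℂ) : Matrix B B ℂ →ₗ[ℂ] Matrix A A ℂ where
  toFun Y := fun i j => ((T (Matrix.single i j 1))ᴴ * Y).trace
  map_add' X Y := by
    funext i j
    erw [Matrix.add_apply]
    simp [Matrix.mul_add, Matrix.add_apply]
  map_smul' c X := by
    funext i j
    erw [Matrix.smul_apply]
    simp [Matrix.mul_smul, Matrix.smul_apply]

/-- The quantity `μ(P)` from Definition 2 of the paper. -/
noncomputable def mu {A B : Type} [Fintype A] [DecidableEq A] [Fintype B] [DecidableEq B]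
    (P : Matrix A A ℂ →ₗ[ℂ] Matrix B B ℂ) : ℝ :=
  sInf { r : ℝ | ∃ T : Matrix A A ℂ →ₗ[ℂ] Matrix B B ℂ,
    IsCompletelyPositive T ∧ hsAdjoint T (P 1) ≠ 0 ∧
    r = ((choi P * choi T).trace).re / ((hsAdjoint T (P 1)).trace).re }

/-- The unique linear map with the given Choi matrix. -/
noncomputable def ofChoi {A B : Type} [Fintype A] [Fintype B]
    (C : Matrix (A × B) (A × B) ℂ) : Matrix A A ℂ →ₗ[ℂ] Matrix B B ℂ where
  toFun X := fun k l => ∑ i : A, ∑ j : A, X i j * C (i, k) (j, l)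
  map_add' X Y := by
    funext k l
    erw [Matrix.add_apply]
    simp [Matrix.add_apply, add_mul, Finset.sum_add_distrib]
  map_smul' c X := by
    funext k l
    erw [Matrix.smul_apply]
    simp [Matrix.smul_apply, smul_eq_mul, Finset.mul_sum, mul_assoc]

/-- The flip operator on `ℂ^d ⊗ ℂ^d`. -/
def flipOp (d : ℕ) : Matrix (Fin d × Fin d) (Fin d × Fin d) ℂ :=
  fun p q => if p.1 = q.2 ∧ p.2 = q.1 then 1 else 0

/-- The projection onto the symmetric subspace of `ℂ^d ⊗ ℂ^d`. -/
noncomputable def Psym (d : ℕ) : Matrix (Fin d × Fin d) (Fin d × Fin d) ℂ :=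
  (1 / 2 : ℂ) • (1 + flipOp d)

/-- The projection onto the antisymmetric subspace of `ℂ^d ⊗ ℂ^d`. -/
noncomputable def Pasym (d : ℕ) : Matrix (Fin d × Fin d) (Fin d × Fin d) ℂ :=
  (1 / 2 : ℂ) • (1 - flipOp d)

/-- The (unnormalized to trace one) Werner state with parameter `p`. -/
noncomputable def wernerState (d : ℕ) (p : ℝ) :
    Matrix (Fin d × Fin d) (Fin d × Fin d) ℂ :=
  ((p : ℂ) / ((d : ℂ) * ((d : ℂ) + 1) / 2)) • Psym d +
    (((1 - p : ℝ) : ℂ) / ((d : ℂ) * ((d : ℂ) - 1) / 2)) • Pasym d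

/-- The Werner map `W_p`, i.e. the unique linear map whose Choi matrix is the
Werner state `ρ_W(p)`. -/
noncomputable def wernerMap (d : ℕ) (p : ℝ) :
    Matrix (Fin d) (Fin d) ℂ →ₗ[ℂ] Matrix (Fin d) (Fin d) ℂ :=
  ofChoi (wernerState d p)

/-- Partial transposition (on the second tensor factor) of a bipartite matrix. -/
def ptranspose {A B : Type} (X : Matrix (A × B) (A × B) ℂ) :
    Matrix (A × B) (A × B) ℂ :=
  fun p q => X (p.1, q.2) (q.1, p.2)

/-- Partial transposition of all `B`-systems of a multipartite matrix whose
subsystems each consist of an `A`-part (first factor) and a `B`-part (second factor). -/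
def ptransposeAll {ι A B : Type} (X : Matrix (ι → A × B) (ι → A × B) ℂ) :
    Matrix (ι → A × B) (ι → A × B) ℂ :=
  fun p q => X (fun t => ((p t).1, (q t).2)) (fun t => ((q t).1, (p t).2))

/-- The tensor product of a finite family of matrices. -/
def tensorFamily {ι : Type} [Fintype ι] {κ : Type} (M : ι → Matrix κ κ ℂ) :
    Matrix (ι → κ) (ι → κ) ℂ :=
  fun p q => ∏ t, M t (p t) (q t)

/-- The normalized projections `P₀ = P_sym / d_sym` and `P₁ = P_asym / d_asym`. -/
noncomputable def Pnorm (d : ℕ) : Fin 2 → Matrix (Fin d × Fin d) (Fin d × Fin d) ℂ :=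
  ![((d : ℂ) * ((d : ℂ) + 1) / 2)⁻¹ • Psym d, ((d : ℂ) * ((d : ℂ) - 1) / 2)⁻¹ • Pasym d]

/-- The matrices `F(k,l)` from equation (10) of the paper (with `k, l` 0-based). -/
noncomputable def Fmat (d n m : ℕ) (k : Fin (n + 1)) (l : Fin (m + 1)) :
    Matrix ((Fin n ⊕ Fin m) → Fin d × Fin d) ((Fin n ⊕ Fin m) → Fin d × Fin d) ℂ :=
  ((Nat.factorial n * Nat.factorial m : ℂ))⁻¹ • ∑ f : (Fin n ⊕ Fin m) → Fin 2,
    if (∑ t : Fin n, ((f (Sum.inl t)) : ℕ)) = (k : ℕ) ∧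
        (∑ s : Fin m, ((f (Sum.inr s)) : ℕ)) = (l : ℕ) then
      tensorFamily (fun t => match t with
        | Sum.inl _ => Pnorm d (f t)
        | Sum.inr _ => ptranspose (Pnorm d (f t)))
    else 0

/-- The matrix `H_Q` from equation (9) of the paper (with indices 0-based). -/
noncomputable def HQ (d n m : ℕ) (Q : Matrix (Fin (n + 1)) (Fin (m + 1)) ℝ) :
    Matrix ((Fin n ⊕ Fin m) → Fin d × Fin d) ((Fin n ⊕ Fin m) → Fin d × Fin d) ℂ :=
  ∑ k : Fin (n + 1), ∑ l : Fin (m + 1), (Q k l : ℂ) • Fmat d n m k l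

/-- The matrix `V^m_d` from equation (8) of the paper (with indices 0-based). -/
noncomputable def Vmat (m d : ℕ) : Matrix (Fin (m + 1)) (Fin (m + 1)) ℝ :=
  fun a b => (-1 : ℝ) ^ (a : ℕ) *
    ∑ t ∈ Finset.Icc ((a : ℕ) + (b : ℕ) - m) (min (a : ℕ) (b : ℕ)),
      ((a : ℕ).choose t : ℝ) * ((m - (a : ℕ)).choose ((b : ℕ) - t) : ℝ) *
        (-(((d : ℝ) + 1) / ((d : ℝ) - 1))) ^ t

/-- The vector `v^n_p` from equation (12) of the paper (with index 0-based). -/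
noncomputable def vvec (d n : ℕ) (p : ℝ) : Fin (n + 1) → ℝ :=
  fun k => (((d : ℝ) + 1) / ((d : ℝ) - 1)) ^ (k : ℕ) * (1 - p) ^ (k : ℕ) * p ^ (n - (k : ℕ))

/-- The mixed tensor power `W_{p₁}^{⊗n} ⊗ (ϑ ∘ W_{p₂})^{⊗m}` of Werner maps. -/
noncomputable def wernerMixed (d n m : ℕ) (p₁ p₂ : ℝ) :
    Matrix ((Fin n ⊕ Fin m) → Fin d) ((Fin n ⊕ Fin m) → Fin d) ℂ →ₗ[ℂ]
      Matrix ((Fin n ⊕ Fin m) → Fin d) ((Fin n ⊕ Fin m) → Fin d) ℂ :=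
  mapTensorFamily (fun t => match t with
    | Sum.inl _ => wernerMap d p₁
    | Sum.inr _ => transposeMap (Fin d) ∘ₗ wernerMap d p₂)

private lemma seg_entry {y z E : Matrix (Fin 2) (Fin 2) ℝ} {a b : ℝ}
    (h : a • y + b • z = E) (i j : Fin 2) : a * y i j + b * z i j = E i j := by
  have := congrFun (congrFun h i) j
  simpa using this

private lemma both_zero {ta tb p q : ℝ} (hta : 0 < ta) (htb : 0 < tb)
    (hp : 0 ≤ p) (hq : 0 ≤ q) (h : ta * p + tb * q = 0) : p = 0 ∧ q = 0 :=
  ⟨by nlinarith, by nlinarith⟩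

set_option maxHeartbeats 4000000 in
private lemma aux (D : ℝ) (hD : 2 ≤ D) :
    Set.extremePoints ℝ
      { Q : Matrix (Fin 2) (Fin 2) ℝ |
        (∀ i j, 0 ≤ (Q * !![(1 : ℝ), 1; -1, (D + 1) / (D - 1)]) i j) ∧
        (∀ i j, 0 ≤ (Qᵀ * !![(1 : ℝ), 1; -1, (D + 1) / (D - 1)]) i j) ∧
        (∑ i, ∑ j, Q i j) = 1 } =
    { (1 / (2 * (D + 2))) • !![D + 1, D + 1; D + 1, -(D - 1)],
      !![(1 : ℝ), 0; 0, 0],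
      (1 / 4 : ℝ) • !![(1 : ℝ), 1; 1, 1],
      (1 / 2 : ℝ) • !![(1 : ℝ), 0; 1, 0],
      (1 / 2 : ℝ) • !![(1 : ℝ), 1; 0, 0] } := by
  have hD1 : (0:ℝ) < D - 1 := by linarith
  have hD2 : (0:ℝ) < D + 2 := by linarith
  have hD2' : (2:ℝ) * (D + 2) ≠ 0 := by positivity
  set c := (D + 1) / (D - 1) with hcdef
  have hc : 1 < c := by rw [hcdef, lt_div_iff₀ hD1]; linarith
  have hcc : c * (D - 1) = D + 1 := by rw [hcdef]; field_simp
  have hc1 : (0:ℝ) < c + 1 := by linarith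
  have hc1' : c + 1 ≠ 0 := ne_of_gt hc1
  set V : Matrix (Fin 2) (Fin 2) ℝ := !![(1 : ℝ), 1; -1, c] with hV
  set S : Set (Matrix (Fin 2) (Fin 2) ℝ) :=
    { Q : Matrix (Fin 2) (Fin 2) ℝ |
      (∀ i j, 0 ≤ (Q * V) i j) ∧ (∀ i j, 0 ≤ (Qᵀ * V) i j) ∧
      (∑ i, ∑ j, Q i j) = 1 } with hS
  set E1 : Matrix (Fin 2) (Fin 2) ℝ :=
    (1 / (2 * (D + 2))) • !![D + 1, D + 1; D + 1, -(D - 1)] with hE1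
  set E2 : Matrix (Fin 2) (Fin 2) ℝ := !![(1 : ℝ), 0; 0, 0] with hE2
  set E3 : Matrix (Fin 2) (Fin 2) ℝ := (1 / 4 : ℝ) • !![(1 : ℝ), 1; 1, 1] with hE3
  set E4 : Matrix (Fin 2) (Fin 2) ℝ := (1 / 2 : ℝ) • !![(1 : ℝ), 0; 1, 0] with hE4
  set E5 : Matrix (Fin 2) (Fin 2) ℝ := (1 / 2 : ℝ) • !![(1 : ℝ), 1; 0, 0] with hE5
  clear_value c V S E1 E2 E3 E4 E5
  have hmem : ∀ Q : Matrix (Fin 2) (Fin 2) ℝ, Q ∈ S ↔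
      (0 ≤ Q 0 0 - Q 0 1 ∧ 0 ≤ Q 0 0 + c * Q 0 1 ∧ 0 ≤ Q 1 0 - Q 1 1 ∧
       0 ≤ Q 1 0 + c * Q 1 1 ∧ 0 ≤ Q 0 0 - Q 1 0 ∧ 0 ≤ Q 0 0 + c * Q 1 0 ∧
       0 ≤ Q 0 1 - Q 1 1 ∧ 0 ≤ Q 0 1 + c * Q 1 1 ∧
       Q 0 0 + Q 0 1 + Q 1 0 + Q 1 1 = 1) := by
    intro Q
    rw [hS]
    simp only [Set.mem_setOf_eq]
    constructor
    · rintro ⟨h1, h2, h3⟩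
      have e1 := h1 0 0
      have e2 := h1 0 1
      have e3 := h1 1 0
      have e4 := h1 1 1
      have f1 := h2 0 0
      have f2 := h2 0 1
      have f3 := h2 1 0
      have f4 := h2 1 1
      simp only [hV, Matrix.mul_apply, Matrix.transpose_apply, Fin.sum_univ_two,
        Matrix.cons_val', Matrix.cons_val_zero, Matrix.cons_val_one, Matrix.head_cons,
        Matrix.head_fin_const, Matrix.empty_val', Matrix.cons_val_fin_one,
        Matrix.of_apply, mul_one, mul_neg_one, mul_neg] at e1 e2 e3 e4 f1 f2 f3 f4
      simp only [Fin.sum_univ_two] at h3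
      exact ⟨by linarith, by linarith, by linarith, by linarith, by linarith, by linarith,
        by linarith, by linarith, by linarith⟩
    · rintro ⟨h1, h2, h3, h4, h5, h6, h7, h8, h9⟩
      refine ⟨fun i j => ?_, fun i j => ?_, ?_⟩
      · fin_cases i <;> fin_cases j <;>
          simp only [hV, Matrix.mul_apply, Fin.sum_univ_two, Matrix.cons_val',
            Matrix.cons_val_zero, Matrix.cons_val_one, Matrix.head_cons,
            Matrix.head_fin_const, Matrix.empty_val', Matrix.cons_val_fin_one,
            Matrix.of_apply, mul_one, mul_neg_one, mul_neg, Fin.isValue, Fin.mk_zero, Fin.mk_one] <;> linarith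
      · fin_cases i <;> fin_cases j <;>
          simp only [hV, Matrix.mul_apply, Matrix.transpose_apply, Fin.sum_univ_two,
            Matrix.cons_val', Matrix.cons_val_zero, Matrix.cons_val_one, Matrix.head_cons,
            Matrix.head_fin_const, Matrix.empty_val', Matrix.cons_val_fin_one,
            Matrix.of_apply, mul_one, mul_neg_one, mul_neg, Fin.isValue, Fin.mk_zero, Fin.mk_one] <;> linarith
      · simp only [Fin.sum_univ_two]; linarith
  have hDne : (D:ℝ) + 2 ≠ 0 := ne_of_gt hD2
  have hentry : ∀ (x : ℝ) (M : Matrix (Fin 2) (Fin 2) ℝ) (i j : Fin 2),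
      (x • M) i j = x * M i j := fun x M i j => rfl
  -- entry values
  have hv1a : E1 0 0 = (D+1)/(2*(D+2)) := by
    rw [hE1, hentry]
    simp only [Matrix.cons_val', Matrix.cons_val_zero, Matrix.cons_val_one, Matrix.head_cons,
      Matrix.head_fin_const, Matrix.empty_val', Matrix.cons_val_fin_one, Matrix.of_apply]
    ring
  have hv1b : E1 0 1 = (D+1)/(2*(D+2)) := by
    rw [hE1, hentry]
    simp only [Matrix.cons_val', Matrix.cons_val_zero, Matrix.cons_val_one, Matrix.head_cons,
      Matrix.head_fin_const, Matrix.empty_val', Matrix.cons_val_fin_one, Matrix.of_apply]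
    ring
  have hv1c : E1 1 0 = (D+1)/(2*(D+2)) := by
    rw [hE1, hentry]
    simp only [Matrix.cons_val', Matrix.cons_val_zero, Matrix.cons_val_one, Matrix.head_cons,
      Matrix.head_fin_const, Matrix.empty_val', Matrix.cons_val_fin_one, Matrix.of_apply]
    ring
  have hv1d : E1 1 1 = -(D-1)/(2*(D+2)) := by
    rw [hE1, hentry]
    simp only [Matrix.cons_val', Matrix.cons_val_zero, Matrix.cons_val_one, Matrix.head_cons,
      Matrix.head_fin_const, Matrix.empty_val', Matrix.cons_val_fin_one, Matrix.of_apply]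
    ring
  have hv2a : E2 0 0 = 1 := by rw [hE2]; norm_num
  have hv2b : E2 0 1 = 0 := by rw [hE2]; norm_num
  have hv2c : E2 1 0 = 0 := by rw [hE2]; norm_num
  have hv2d : E2 1 1 = 0 := by rw [hE2]; norm_num
  have hv3a : E3 0 0 = 1/4 := by rw [hE3, hentry]; norm_num
  have hv3b : E3 0 1 = 1/4 := by rw [hE3, hentry]; norm_num
  have hv3c : E3 1 0 = 1/4 := by rw [hE3, hentry]; norm_num
  have hv3d : E3 1 1 = 1/4 := by rw [hE3, hentry]; norm_num
  have hv4a : E4 0 0 = 1/2 := by rw [hE4, hentry]; norm_num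
  have hv4b : E4 0 1 = 0 := by rw [hE4, hentry]; norm_num
  have hv4c : E4 1 0 = 1/2 := by rw [hE4, hentry]; norm_num
  have hv4d : E4 1 1 = 0 := by rw [hE4, hentry]; norm_num
  have hv5a : E5 0 0 = 1/2 := by rw [hE5, hentry]; norm_num
  have hv5b : E5 0 1 = 1/2 := by rw [hE5, hentry]; norm_num
  have hv5c : E5 1 0 = 0 := by rw [hE5, hentry]; norm_num
  have hv5d : E5 1 1 = 0 := by rw [hE5, hentry]; norm_num
  -- memberships
  have hsE1 : (0:ℝ) < (D+1)/(2*(D+2)) := by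
    apply div_pos <;> linarith
  have hrE1 : (0:ℝ) ≤ (D-1)/(2*(D+2)) := by
    apply div_nonneg <;> linarith
  have hcfE1 : c * (-(D-1)/(2*(D+2))) = -((D+1)/(2*(D+2))) := by
    rw [hcdef]
    field_simp
  have hcs := mul_pos (show (0:ℝ) < c by linarith) hsE1
  have hE1S : E1 ∈ S := by
    rw [hmem, hv1a, hv1b, hv1c, hv1d]
    refine ⟨by norm_num, by linarith, ?_, by rw [hcfE1]; linarith, by norm_num, by linarith,
      ?_, by rw [hcfE1]; linarith, ?_⟩
    · have h' : -(D-1)/(2*(D+2)) = -((D-1)/(2*(D+2))) := by ring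
      rw [h']; linarith
    · have h' : -(D-1)/(2*(D+2)) = -((D-1)/(2*(D+2))) := by ring
      rw [h']; linarith
    · field_simp
      ring
  have hE2S : E2 ∈ S := by
    rw [hmem, hv2a, hv2b, hv2c, hv2d]
    norm_num
  have hE3S : E3 ∈ S := by
    rw [hmem, hv3a, hv3b, hv3c, hv3d]
    refine ⟨by norm_num, by linarith, by norm_num, by linarith, by norm_num, by linarith,
      by norm_num, by linarith, by norm_num⟩
  have hE4S : E4 ∈ S := by
    rw [hmem, hv4a, hv4b, hv4c, hv4d]
    refine ⟨by norm_num, by norm_num, by norm_num, by norm_num, by norm_num, by linarith,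
      by norm_num, by norm_num, by norm_num⟩
  have hE5S : E5 ∈ S := by
    rw [hmem, hv5a, hv5b, hv5c, hv5d]
    refine ⟨by norm_num, by linarith, by norm_num, by norm_num, by norm_num, by norm_num,
      by norm_num, by norm_num, by norm_num⟩
  have hne1 : D - 1 ≠ 0 := ne_of_gt hD1
  have hne0 : D ≠ 0 := by intro h; rw [h] at hD; norm_num at hD
  -- convexity of S
  have hconv : Convex ℝ S := by
    intro x hx y hy ka kb hka hkb hkab
    obtain ⟨x1, x2, x3, x4, x5, x6, x7, x8, x9⟩ := (hmem x).1 hx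
    obtain ⟨y1, y2, y3, y4, y5, y6, y7, y8, y9⟩ := (hmem y).1 hy
    rw [hmem]
    simp only [Matrix.add_apply, Matrix.smul_apply, smul_eq_mul]
    refine ⟨by linarith [mul_nonneg hka x1, mul_nonneg hkb y1],
      by linarith [mul_nonneg hka x2, mul_nonneg hkb y2],
      by linarith [mul_nonneg hka x3, mul_nonneg hkb y3],
      by linarith [mul_nonneg hka x4, mul_nonneg hkb y4],
      by linarith [mul_nonneg hka x5, mul_nonneg hkb y5],
      by linarith [mul_nonneg hka x6, mul_nonneg hkb y6],
      by linarith [mul_nonneg hka x7, mul_nonneg hkb y7],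
      by linarith [mul_nonneg hka x8, mul_nonneg hkb y8],
      by linear_combination ka * x9 + kb * y9 + hkab⟩
  -- S is contained in the convex hull of the candidate extreme points
  have hsub : S ⊆ convexHull ℝ ({E1, E2, E3, E4, E5} : Set (Matrix (Fin 2) (Fin 2) ℝ)) := by
    intro Q hQ
    obtain ⟨h1, h2, h3, h4, h5, h6, h7, h8, h9⟩ := (hmem Q).1 hQ
    set u := max 0 (max (-((c+1) * Q 1 1)) (2 * Q 0 1 + 2 * Q 1 0 - 1)) with hu
    clear_value u
    have hu0 : 0 ≤ u := by rw [hu]; exact le_max_left _ _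
    have huf : -((c+1) * Q 1 1) ≤ u := by
      rw [hu]; exact le_trans (le_max_left _ _) (le_max_right _ _)
    have hube : 2 * Q 0 1 + 2 * Q 1 0 - 1 ≤ u := by
      rw [hu]; exact le_trans (le_max_right _ _) (le_max_right _ _)
    have huU1 : u ≤ Q 1 0 - Q 1 1 := by
      rw [hu]; refine max_le h3 (max_le ?_ ?_) <;> linarith
    have huU2 : u ≤ Q 0 1 - Q 1 1 := by
      rw [hu]; refine max_le h7 (max_le ?_ ?_) <;> linarith
    set wt : Fin 5 → ℝ := ![u * (3*c-1) / (c+1), 1 - 2 * Q 0 1 - 2 * Q 1 0 + u,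
      4 * Q 1 1 + 4 * u / (c+1), 2 * (Q 1 0 - Q 1 1) - 2 * u,
      2 * (Q 0 1 - Q 1 1) - 2 * u] with hwt
    set pt : Fin 5 → Matrix (Fin 2) (Fin 2) ℝ := ![E1, E2, E3, E4, E5] with hpt
    have hw0 : 0 ≤ u * (3*c-1) / (c+1) :=
      div_nonneg (mul_nonneg hu0 (by linarith)) (by linarith)
    have hw1 : 0 ≤ 1 - 2 * Q 0 1 - 2 * Q 1 0 + u := by linarith
    have hw2 : 0 ≤ 4 * Q 1 1 + 4 * u / (c+1) := by
      have h' : 0 ≤ ((c+1) * Q 1 1 + u) / (c+1) := div_nonneg (by linarith) (by linarith)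
      have e' : ((c+1) * Q 1 1 + u) / (c+1) = Q 1 1 + u / (c+1) := by
        field_simp
      rw [e'] at h'
      have e2 : 4 * Q 1 1 + 4 * u / (c+1) = 4 * (Q 1 1 + u / (c+1)) := by ring
      rw [e2]
      linarith
    have hw3 : 0 ≤ 2 * (Q 1 0 - Q 1 1) - 2 * u := by linarith
    have hw4 : 0 ≤ 2 * (Q 0 1 - Q 1 1) - 2 * u := by linarith
    have ha : Q 0 0 = 1 - Q 0 1 - Q 1 0 - Q 1 1 := by linarith
    have hcomb : Q = ∑ i : Fin 5, wt i • pt i := by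
      rw [hwt, hpt, Fin.sum_univ_five]
      ext i j
      fin_cases i <;> fin_cases j <;>
        simp only [Matrix.cons_val_zero, Matrix.cons_val_one, Matrix.head_cons,
          Matrix.cons_val_two, Matrix.tail_cons, Matrix.cons_val_three, Matrix.cons_val_four,
          Matrix.add_apply, Matrix.smul_apply, smul_eq_mul, Fin.mk_zero, Fin.mk_one,
          hv1a, hv1b, hv1c, hv1d, hv2a, hv2b, hv2c, hv2d, hv3a, hv3b, hv3c, hv3d,
          hv4a, hv4b, hv4c, hv4d, hv5a, hv5b, hv5c, hv5d]
      · rw [ha, hcdef]; field_simp; ring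
      · rw [hcdef]; field_simp; ring
      · rw [hcdef]; field_simp; ring
      · rw [hcdef]; field_simp; ring
    rw [hcomb]
    apply (convex_convexHull ℝ _).sum_mem
    · intro i _
      fin_cases i <;>
        simp only [hwt, Matrix.cons_val_zero, Matrix.cons_val_one, Matrix.head_cons,
          Matrix.cons_val_two, Matrix.tail_cons, Matrix.cons_val_three, Matrix.cons_val_four,
          Fin.mk_zero, Fin.mk_one]
      exacts [hw0, hw1, hw2, hw3, hw4]
    · rw [hwt, Fin.sum_univ_five]
      simp only [Matrix.cons_val_zero, Matrix.cons_val_one, Matrix.head_cons,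
        Matrix.cons_val_two, Matrix.tail_cons, Matrix.cons_val_three, Matrix.cons_val_four]
      rw [hcdef]
      field_simp
      ring
    · intro i _
      fin_cases i <;>
        simp only [hpt, Matrix.cons_val_zero, Matrix.cons_val_one, Matrix.head_cons,
          Matrix.cons_val_two, Matrix.tail_cons, Matrix.cons_val_three, Matrix.cons_val_four,
          Fin.mk_zero, Fin.mk_one] <;>
        refine subset_convexHull ℝ _ ?_ <;>
        simp [Set.mem_insert_iff]
  have hSF : S = convexHull ℝ ({E1, E2, E3, E4, E5} : Set (Matrix (Fin 2) (Fin 2) ℝ)) := by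
    refine Set.Subset.antisymm hsub (convexHull_min ?_ hconv)
    intro x hx
    rcases hx with rfl | rfl | rfl | rfl | rfl
    exacts [hE1S, hE2S, hE3S, hE4S, hE5S]
  -- extremality of the five candidates
  have hE1X : E1 ∈ Set.extremePoints ℝ S := by
    refine ⟨hE1S, fun y hy z hz hseg => ?_⟩
    obtain ⟨ta, tb, hta, htb, htab, heq⟩ := hseg
    obtain ⟨y1, y2, y3, y4, y5, y6, y7, y8, y9⟩ := (hmem y).1 hy
    obtain ⟨z1, z2, z3, z4, z5, z6, z7, z8, z9⟩ := (hmem z).1 hz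
    have h00 := seg_entry heq 0 0
    have h01 := seg_entry heq 0 1
    have h10 := seg_entry heq 1 0
    have h11 := seg_entry heq 1 1
    rw [hv1a] at h00
    rw [hv1b] at h01
    rw [hv1c] at h10
    rw [hv1d] at h11
    have g1 := both_zero hta htb y1 z1 (by linear_combination h00 - h01)
    have g5 := both_zero hta htb y5 z5 (by linear_combination h00 - h10)
    have g4 := both_zero hta htb y4 z4
      (by linear_combination h10 + c * h11 - (1/(2*(D+2))) * hcc)
    have pin : ∀ w : Matrix (Fin 2) (Fin 2) ℝ,
        w 0 0 + w 0 1 + w 1 0 + w 1 1 = 1 → w 0 0 - w 0 1 = 0 → w 0 0 - w 1 0 = 0 →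
        w 1 0 + c * w 1 1 = 0 → w = E1 := by
      intro w hw p1 p5 p4
      have h' : w 0 0 * (3*c - 1) = c := by
        linear_combination c * hw + c * p1 + (c-1) * p5 - p4
      have hA : w 0 0 * (2*D + 4) = D + 1 := by
        linear_combination (D-1) * h' + (1 - 3 * w 0 0) * hcc
      ext i j
      fin_cases i <;> fin_cases j <;>
        simp only [Fin.mk_zero, Fin.mk_one, hv1a, hv1b, hv1c, hv1d]
      · rw [eq_div_iff hD2']
        linear_combination hA
      · rw [eq_div_iff hD2']
        linear_combination hA - (2*D+4) * p1
      · rw [eq_div_iff hD2']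
        linear_combination hA - (2*D+4) * p5
      · rw [eq_div_iff hD2']
        linear_combination (2*D+4) * hw + (2*D+4) * p1 + (2*D+4) * p5 - 3 * hA
    exact pin y y9 g1.1 g5.1 g4.1
  have hE2X : E2 ∈ Set.extremePoints ℝ S := by
    refine ⟨hE2S, fun y hy z hz hseg => ?_⟩
    obtain ⟨ta, tb, hta, htb, htab, heq⟩ := hseg
    obtain ⟨y1, y2, y3, y4, y5, y6, y7, y8, y9⟩ := (hmem y).1 hy
    obtain ⟨z1, z2, z3, z4, z5, z6, z7, z8, z9⟩ := (hmem z).1 hz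
    have h00 := seg_entry heq 0 0
    have h01 := seg_entry heq 0 1
    have h10 := seg_entry heq 1 0
    have h11 := seg_entry heq 1 1
    rw [hv2a] at h00
    rw [hv2b] at h01
    rw [hv2c] at h10
    rw [hv2d] at h11
    have g3 := both_zero hta htb y3 z3 (by linear_combination h10 - h11)
    have g4 := both_zero hta htb y4 z4 (by linear_combination h10 + c * h11)
    have g7 := both_zero hta htb y7 z7 (by linear_combination h01 - h11)
    have pin : ∀ w : Matrix (Fin 2) (Fin 2) ℝ,
        w 0 0 + w 0 1 + w 1 0 + w 1 1 = 1 → w 1 0 - w 1 1 = 0 → w 1 0 + c * w 1 1 = 0 →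
        w 0 1 - w 1 1 = 0 → w = E2 := by
      intro w hw p3 p4 p7
      have hf' : w 1 1 * (c + 1) = 0 := by linear_combination p4 - p3
      have hf : w 1 1 = 0 := by
        rcases mul_eq_zero.mp hf' with h | h
        · exact h
        · exact absurd h hc1'
      ext i j
      fin_cases i <;> fin_cases j <;>
        simp only [Fin.mk_zero, Fin.mk_one, hv2a, hv2b, hv2c, hv2d] <;> linarith
    exact pin y y9 g3.1 g4.1 g7.1
  have hE3X : E3 ∈ Set.extremePoints ℝ S := by
    refine ⟨hE3S, fun y hy z hz hseg => ?_⟩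
    obtain ⟨ta, tb, hta, htb, htab, heq⟩ := hseg
    obtain ⟨y1, y2, y3, y4, y5, y6, y7, y8, y9⟩ := (hmem y).1 hy
    obtain ⟨z1, z2, z3, z4, z5, z6, z7, z8, z9⟩ := (hmem z).1 hz
    have h00 := seg_entry heq 0 0
    have h01 := seg_entry heq 0 1
    have h10 := seg_entry heq 1 0
    have h11 := seg_entry heq 1 1
    rw [hv3a] at h00
    rw [hv3b] at h01
    rw [hv3c] at h10
    rw [hv3d] at h11
    have g1 := both_zero hta htb y1 z1 (by linear_combination h00 - h01)
    have g3 := both_zero hta htb y3 z3 (by linear_combination h10 - h11)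
    have g5 := both_zero hta htb y5 z5 (by linear_combination h00 - h10)
    have pin : ∀ w : Matrix (Fin 2) (Fin 2) ℝ,
        w 0 0 + w 0 1 + w 1 0 + w 1 1 = 1 → w 0 0 - w 0 1 = 0 → w 1 0 - w 1 1 = 0 →
        w 0 0 - w 1 0 = 0 → w = E3 := by
      intro w hw p1 p3 p5
      ext i j
      fin_cases i <;> fin_cases j <;>
        simp only [Fin.mk_zero, Fin.mk_one, hv3a, hv3b, hv3c, hv3d] <;> linarith
    exact pin y y9 g1.1 g3.1 g5.1
  have hE4X : E4 ∈ Set.extremePoints ℝ S := by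
    refine ⟨hE4S, fun y hy z hz hseg => ?_⟩
    obtain ⟨ta, tb, hta, htb, htab, heq⟩ := hseg
    obtain ⟨y1, y2, y3, y4, y5, y6, y7, y8, y9⟩ := (hmem y).1 hy
    obtain ⟨z1, z2, z3, z4, z5, z6, z7, z8, z9⟩ := (hmem z).1 hz
    have h00 := seg_entry heq 0 0
    have h01 := seg_entry heq 0 1
    have h10 := seg_entry heq 1 0
    have h11 := seg_entry heq 1 1
    rw [hv4a] at h00
    rw [hv4b] at h01
    rw [hv4c] at h10
    rw [hv4d] at h11
    have g5 := both_zero hta htb y5 z5 (by linear_combination h00 - h10)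
    have g7 := both_zero hta htb y7 z7 (by linear_combination h01 - h11)
    have g8 := both_zero hta htb y8 z8 (by linear_combination h01 + c * h11)
    have pin : ∀ w : Matrix (Fin 2) (Fin 2) ℝ,
        w 0 0 + w 0 1 + w 1 0 + w 1 1 = 1 → w 0 0 - w 1 0 = 0 → w 0 1 - w 1 1 = 0 →
        w 0 1 + c * w 1 1 = 0 → w = E4 := by
      intro w hw p5 p7 p8
      have hf' : w 1 1 * (c + 1) = 0 := by linear_combination p8 - p7
      have hf : w 1 1 = 0 := by
        rcases mul_eq_zero.mp hf' with h | h
        · exact h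
        · exact absurd h hc1'
      ext i j
      fin_cases i <;> fin_cases j <;>
        simp only [Fin.mk_zero, Fin.mk_one, hv4a, hv4b, hv4c, hv4d] <;> linarith
    exact pin y y9 g5.1 g7.1 g8.1
  have hE5X : E5 ∈ Set.extremePoints ℝ S := by
    refine ⟨hE5S, fun y hy z hz hseg => ?_⟩
    obtain ⟨ta, tb, hta, htb, htab, heq⟩ := hseg
    obtain ⟨y1, y2, y3, y4, y5, y6, y7, y8, y9⟩ := (hmem y).1 hy
    obtain ⟨z1, z2, z3, z4, z5, z6, z7, z8, z9⟩ := (hmem z).1 hz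
    have h00 := seg_entry heq 0 0
    have h01 := seg_entry heq 0 1
    have h10 := seg_entry heq 1 0
    have h11 := seg_entry heq 1 1
    rw [hv5a] at h00
    rw [hv5b] at h01
    rw [hv5c] at h10
    rw [hv5d] at h11
    have g1 := both_zero hta htb y1 z1 (by linear_combination h00 - h01)
    have g3 := both_zero hta htb y3 z3 (by linear_combination h10 - h11)
    have g4 := both_zero hta htb y4 z4 (by linear_combination h10 + c * h11)
    have pin : ∀ w : Matrix (Fin 2) (Fin 2) ℝ,
        w 0 0 + w 0 1 + w 1 0 + w 1 1 = 1 → w 0 0 - w 0 1 = 0 → w 1 0 - w 1 1 = 0 →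
        w 1 0 + c * w 1 1 = 0 → w = E5 := by
      intro w hw p1 p3 p4
      have hf' : w 1 1 * (c + 1) = 0 := by linear_combination p4 - p3
      have hf : w 1 1 = 0 := by
        rcases mul_eq_zero.mp hf' with h | h
        · exact h
        · exact absurd h hc1'
      ext i j
      fin_cases i <;> fin_cases j <;>
        simp only [Fin.mk_zero, Fin.mk_one, hv5a, hv5b, hv5c, hv5d] <;> linarith
    exact pin y y9 g1.1 g3.1 g4.1
  -- assembly
  apply Set.Subset.antisymm
  · rw [hSF]
    exact extremePoints_convexHull_subset
  · intro x hx
    rcases hx with rfl | rfl | rfl | rfl | rfl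
    exacts [hE1X, hE2X, hE3X, hE4X, hE5X]


theorem stmt12 (d : ℕ) (hd : 2 ≤ d) :
    Set.extremePoints ℝ
      { Q : Matrix (Fin 2) (Fin 2) ℝ |
        (∀ i j, 0 ≤ (Q * !![(1 : ℝ), 1; -1, ((d : ℝ) + 1) / ((d : ℝ) - 1)]) i j) ∧
        (∀ i j, 0 ≤ (Qᵀ * !![(1 : ℝ), 1; -1, ((d : ℝ) + 1) / ((d : ℝ) - 1)]) i j) ∧
        (∑ i, ∑ j, Q i j) = 1 } =
    { (1 / (2 * ((d : ℝ) + 2))) • !![(d : ℝ) + 1, (d : ℝ) + 1; (d : ℝ) + 1, -((d : ℝ) - 1)],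
      !![(1 : ℝ), 0; 0, 0],
      (1 / 4 : ℝ) • !![(1 : ℝ), 1; 1, 1],
      (1 / 2 : ℝ) • !![(1 : ℝ), 0; 1, 0],
      (1 / 2 : ℝ) • !![(1 : ℝ), 1; 0, 0] } := aux (d : ℝ) (by exact_mod_cast hd)

end TensorDecomp
end

section
/- Let d ≥ 2, n ∈ ℕ and p₁, p₂ ∈ [0,1]. If ((d−1)/(d+1))·p₁ⁿp₂ⁿ + (1−p₁)ⁿp₂ⁿ + p₁ⁿ(1−p₂)ⁿ − (1−p₁)ⁿ(1−p₂)ⁿ < 0, then the map W_{p₁}^{⊗n} ⊗ (ϑ ∘ W_{p₂})^{⊗n} : M_d(ℂ)^{⊗2n} → M_d(ℂ)^{⊗2n} is not decomposable. -/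
open scoped ComplexOrder Kronecker Matrix

namespace TensorDecomp

section Aux

open Matrix

variable {d : ℕ}

/-! ### General positive semidefiniteness helpers -/

lemma psd_smul {m : Type} [Fintype m] {M : Matrix m m ℂ} (hM : M.PosSemidef) {r : ℝ}
    (hr : 0 ≤ r) : ((r : ℂ) • M).PosSemidef := by
  refine Matrix.PosSemidef.of_dotProduct_mulVec_nonneg ?_ fun x => ?_
  · unfold Matrix.IsHermitian
    rw [Matrix.conjTranspose_smul, hM.1.eq, RCLike.star_def, Complex.conj_ofReal]
  · rw [smul_mulVec, dotProduct_smul, smul_eq_mul]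
    exact mul_nonneg (Complex.zero_le_real.mpr hr) (hM.dotProduct_mulVec_nonneg x)

lemma psd_sum {m ι : Type} [Fintype m] (s : Finset ι) (f : ι → Matrix m m ℂ)
    (h : ∀ i ∈ s, (f i).PosSemidef) : (∑ i ∈ s, f i).PosSemidef := by
  classical
  induction s using Finset.induction with
  | empty => simpa using Matrix.PosSemidef.zero
  | @insert a s ha ih =>
    rw [Finset.sum_insert ha]
    exact (h a (Finset.mem_insert_self _ _)).add
      (ih fun i hi => h i (Finset.mem_insert_of_mem hi))

lemma psd_of_proj {m : Type} [Fintype m] {M : Matrix m m ℂ} (h1 : Mᴴ = M)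
    (h2 : M * M = M) : M.PosSemidef := by
  have : M = Mᴴ * M := by rw [h1, h2]
  rw [this]
  exact Matrix.posSemidef_conjTranspose_mul_self M

lemma psd_trace_nonneg {m : Type} [Fintype m] [DecidableEq m] {M : Matrix m m ℂ}
    (hM : M.PosSemidef) : 0 ≤ M.trace := by
  have key : ∀ i, 0 ≤ M i i := by
    intro i
    have h := hM.dotProduct_mulVec_nonneg (fun j => if j = i then (1 : ℂ) else 0)
    simpa [dotProduct, Matrix.mulVec, Finset.sum_ite_eq', mul_ite, apply_ite] using h
  exact Finset.sum_nonneg fun i _ => key i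

lemma psd_exists_conjTranspose_mul_self {m : Type} [Fintype m] [DecidableEq m]
    {M : Matrix m m ℂ} (hM : M.PosSemidef) : ∃ B : Matrix m m ℂ, M = Bᴴ * B := by
  open scoped MatrixOrder Matrix.Norms.L2Operator in
  obtain ⟨B, hB⟩ := CStarAlgebra.nonneg_iff_eq_star_mul_self.mp hM.nonneg
  exact ⟨B, hB⟩

lemma trace_mul_psd_nonneg {m : Type} [Fintype m] [DecidableEq m] {A B : Matrix m m ℂ}
    (hA : A.PosSemidef) (hB : B.PosSemidef) : 0 ≤ (A * B).trace := by
  obtain ⟨C, rfl⟩ := psd_exists_conjTranspose_mul_self hB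
  rw [← Matrix.mul_assoc, Matrix.trace_mul_cycle]
  exact psd_trace_nonneg (hA.mul_mul_conjTranspose_same C)

lemma my_trace_submatrix {α β : Type} [Fintype α] [Fintype β] (e : α ≃ β)
    (M : Matrix β β ℂ) : (M.submatrix e e).trace = M.trace :=
  Fintype.sum_equiv e _ _ fun _ => rfl

lemma my_trace_submatrix_mul {α β : Type} [Fintype α] [Fintype β] (e : α ≃ β)
    (X Y : Matrix β β ℂ) :
    ((X.submatrix e e) * (Y.submatrix e e)).trace = (X * Y).trace := by
  rw [Matrix.submatrix_mul_equiv, my_trace_submatrix]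

end Aux
section TensorAux

open Matrix

/-- tensorFamily of PSD matrices is PSD. -/
lemma tensorFamily_posSemidef {ι κ : Type} [Fintype ι] [DecidableEq ι] [Fintype κ]
    (M : ι → Matrix κ κ ℂ) (h : ∀ t, (M t).PosSemidef) :
    (tensorFamily M).PosSemidef := by
  classical
  have hB : ∀ t, ∃ B : Matrix κ κ ℂ, M t = Bᴴ * B := fun t =>
    psd_exists_conjTranspose_mul_self (h t)
  choose B hBeq using hB
  have key : tensorFamily M = (tensorFamily B)ᴴ * tensorFamily B := by
    funext p q
    simp only [Matrix.mul_apply, Matrix.conjTranspose_apply, tensorFamily]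
    have step : ∀ r : ι → κ,
        star (∏ t, B t (r t) (p t)) * ∏ t, B t (r t) (q t)
          = ∏ t, (star (B t (r t) (p t)) * B t (r t) (q t)) := by
      intro r
      rw [star_prod, ← Finset.prod_mul_distrib]
    simp only [step]
    calc ∏ t, M t (p t) (q t)
        = ∏ t, ∑ x : κ, star (B t x (p t)) * B t x (q t) := by
          refine Finset.prod_congr rfl fun t _ => ?_
          rw [hBeq t]
          simp [Matrix.mul_apply, Matrix.conjTranspose_apply]
      _ = ∑ r : ι → κ, ∏ t, (star (B t (r t) (p t)) * B t (r t) (q t)) :=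
          Fintype.prod_sum (fun t x => star (B t x (p t)) * B t x (q t))
  rw [key]
  exact Matrix.posSemidef_conjTranspose_mul_self _

lemma trace_tensorFamily_mul {ι κ : Type} [Fintype ι] [DecidableEq ι] [Fintype κ]
    (ρ M : ι → Matrix κ κ ℂ) :
    (tensorFamily ρ * tensorFamily M).trace = ∏ t, (ρ t * M t).trace := by
  classical
  have hsite : ∀ t, (ρ t * M t).trace = ∑ z : κ × κ, ρ t z.1 z.2 * M t z.2 z.1 := by
    intro t
    rw [Fintype.sum_prod_type]
    simp [Matrix.trace, Matrix.diag, Matrix.mul_apply, mul_comm]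
  simp only [hsite]
  rw [Fintype.prod_sum (fun t (z : κ × κ) => ρ t z.1 z.2 * M t z.2 z.1)]
  have lhs : (tensorFamily ρ * tensorFamily M).trace
      = ∑ z : ((ι → κ) × (ι → κ)), ∏ t, (ρ t (z.1 t) (z.2 t) * M t (z.2 t) (z.1 t)) := by
    rw [Fintype.sum_prod_type]
    simp only [Matrix.trace, Matrix.diag, Matrix.mul_apply, tensorFamily]
    refine Finset.sum_congr rfl fun p _ => Finset.sum_congr rfl fun q _ => ?_
    rw [← Finset.prod_mul_distrib]
  rw [lhs]
  exact Fintype.sum_equiv (Equiv.arrowProdEquivProdArrow ι (fun _ => κ) (fun _ => κ)).symm _ _ fun z => rfl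

lemma tensorFamily_expand {ι κ : Type} [Fintype ι] [DecidableEq ι] [Fintype κ]
    (N W : ι → Matrix κ κ ℂ) (a : ι → ℂ) :
    tensorFamily (fun t => N t + a t • W t)
      = ∑ g : ι → Bool, (∏ t, if g t then a t else 1) •
          tensorFamily (fun t => if g t then W t else N t) := by
  classical
  funext p q
  simp only [Matrix.sum_apply, Matrix.smul_apply, tensorFamily, Matrix.add_apply, smul_eq_mul]
  have site : ∀ t, (N t + a t • W t) (p t) (q t)
      = ∑ b : Bool, (if b then a t * W t (p t) (q t) else N t (p t) (q t)) := by
    intro t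
    simp [Matrix.add_apply, Matrix.smul_apply, smul_eq_mul, add_comm]
  calc ∏ t, (N t + a t • W t) (p t) (q t)
      = ∏ t, ∑ b : Bool, (if b then a t * W t (p t) (q t) else N t (p t) (q t)) :=
        Finset.prod_congr rfl fun t _ => site t
    _ = ∑ g : ι → Bool, ∏ t, (if g t then a t * W t (p t) (q t) else N t (p t) (q t)) :=
        Fintype.prod_sum _
    _ = ∑ g : ι → Bool, (∏ t, if g t then a t else 1) *
          ∏ t, (if g t then W t else N t) (p t) (q t) := by
        refine Finset.sum_congr rfl fun g _ => ?_
        rw [← Finset.prod_mul_distrib]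
        refine Finset.prod_congr rfl fun t _ => ?_
        by_cases hg : g t <;> simp [hg]

end TensorAux
section L1

open Matrix

lemma L1 {ι κ : Type} [Fintype ι] [DecidableEq ι] [Fintype κ]
    (N W : ι → Matrix κ κ ℂ) (hN : ∀ t, (N t).PosSemidef) (hW : ∀ t, (W t).PosSemidef)
    (u v : ℝ) (a b : ι → ℝ)
    (hco : ∀ g : ι → Bool,
      0 ≤ u * (∏ t, if g t then a t else 1) + v * (∏ t, if g t then b t else 1)) :
    ((u : ℂ) • tensorFamily (fun t => N t + ((a t : ℝ) : ℂ) • W t)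
      + (v : ℂ) • tensorFamily (fun t => N t + ((b t : ℝ) : ℂ) • W t)).PosSemidef := by
  classical
  rw [tensorFamily_expand N W (fun t => ((a t : ℝ) : ℂ)),
    tensorFamily_expand N W (fun t => ((b t : ℝ) : ℂ)),
    Finset.smul_sum, Finset.smul_sum, ← Finset.sum_add_distrib]
  apply psd_sum
  intro g _
  have castprod : ∀ c : ι → ℝ, (∏ t, if g t then ((c t : ℝ) : ℂ) else 1)
      = (((∏ t, if g t then c t else 1 : ℝ)) : ℂ) := by
    intro c
    push_cast [apply_ite (fun x : ℝ => (x : ℂ))]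
    rfl
  rw [smul_smul, smul_smul, ← add_smul, castprod, castprod, ← Complex.ofReal_mul,
    ← Complex.ofReal_mul, ← Complex.ofReal_add]
  refine psd_smul (tensorFamily_posSemidef _ fun t => ?_) (hco g)
  by_cases hg : g t <;> simp [hg, hN t, hW t]

end L1
section SiteMatrices

open Matrix

variable {d : ℕ}

/-- The (unnormalized) matrix `Ω` with `Ω p q = δ_{p₁ p₂} δ_{q₁ q₂}`. -/
noncomputable def Om (d : ℕ) : Matrix (Fin d × Fin d) (Fin d × Fin d) ℂ :=
  fun p q => if p.1 = p.2 ∧ q.1 = q.2 then 1 else 0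

lemma om_conjTranspose : (Om d)ᴴ = Om d := by
  funext p q
  simp only [Matrix.conjTranspose_apply, Om, apply_ite (star : ℂ → ℂ), star_one, star_zero]
  exact if_congr and_comm rfl rfl

lemma sum_diag_one : (∑ x : Fin d × Fin d, if x.1 = x.2 then (1:ℂ) else 0) = (d : ℂ) := by
  rw [Fintype.sum_prod_type]
  simp [Finset.sum_ite_eq]

lemma om_mul_om : Om d * Om d = (d : ℂ) • Om d := by
  funext p q
  simp only [Matrix.mul_apply, Om, Matrix.smul_apply, smul_eq_mul]
  by_cases hp : p.1 = p.2
  · by_cases hq : q.1 = q.2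
    · simp only [hp, hq, and_self, if_true, true_and, and_true, ite_mul, one_mul, zero_mul,
        mul_one]
      refine Eq.trans (Finset.sum_congr rfl fun x _ => ?_) sum_diag_one
      by_cases hx : x.1 = x.2 <;> simp [hx]
    · simp only [hp, hq, and_false, if_false, mul_zero, true_and]
      refine Eq.trans (Finset.sum_congr rfl fun x _ => ?_) Finset.sum_const_zero
      by_cases hx : x.1 = x.2 <;> simp [hx, hq]
  · simp [hp]

lemma om_posSemidef : (Om d).PosSemidef := by
  refine Matrix.PosSemidef.of_dotProduct_mulVec_nonneg om_conjTranspose fun x => ?_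
  set S : ℂ := ∑ q : Fin d × Fin d, if q.1 = q.2 then x q else 0 with hS
  have hmv : Om d *ᵥ x = fun p => if p.1 = p.2 then S else 0 := by
    funext p
    by_cases hp : p.1 = p.2 <;>
      simp [Matrix.mulVec, dotProduct, Om, hp, ite_and, ite_mul, one_mul, zero_mul, hS,
        mul_ite, mul_zero, mul_one]
  have hdot : (star x) ⬝ᵥ (fun p => if p.1 = p.2 then S else 0)
      = (∑ p : Fin d × Fin d, if p.1 = p.2 then star (x p) else 0) * S := by
    rw [Finset.sum_mul]
    simp only [dotProduct, Pi.star_apply]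
    refine Finset.sum_congr rfl fun p _ => ?_
    by_cases hp : p.1 = p.2 <;> simp [hp]
  have hstar : (∑ p : Fin d × Fin d, if p.1 = p.2 then star (x p) else 0) = star S := by
    rw [hS, star_sum]
    refine Finset.sum_congr rfl fun p _ => ?_
    by_cases hp : p.1 = p.2 <;> simp [hp]
  rw [hmv, hdot, hstar]
  exact star_mul_self_nonneg _

lemma flip_conjTranspose : (flipOp d)ᴴ = flipOp d := by
  funext p q
  simp only [Matrix.conjTranspose_apply, flipOp, apply_ite (star : ℂ → ℂ), star_one, star_zero]
  refine if_congr ?_ rfl rfl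
  constructor <;> rintro ⟨h1, h2⟩ <;> exact ⟨h2.symm, h1.symm⟩

lemma flip_mul_flip : flipOp d * flipOp d = 1 := by
  funext p q
  simp only [Matrix.mul_apply, flipOp, Matrix.one_apply]
  rw [Finset.sum_eq_single (p.2, p.1)]
  · simp only [and_true, ite_mul, one_mul, zero_mul]
    have h1 : (p.1 = p.1 ∧ p.2 = p.2) := ⟨rfl, rfl⟩
    simp only [h1, if_true]
    refine if_congr ?_ rfl rfl
    rw [Prod.ext_iff]
    constructor <;> rintro ⟨h1, h2⟩ <;> exact ⟨h2, h1⟩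
  · intro r _ hr
    have : ¬(p.1 = r.2 ∧ p.2 = r.1) := by
      rintro ⟨h1, h2⟩
      exact hr (Prod.ext h2.symm h1.symm)
    simp [this]
  · intro h
    exact absurd (Finset.mem_univ _) h

lemma psym_conjTranspose : (Psym d)ᴴ = Psym d := by
  unfold Psym
  rw [Matrix.conjTranspose_smul, Matrix.conjTranspose_add, Matrix.conjTranspose_one,
    flip_conjTranspose]
  norm_num

lemma pasym_conjTranspose : (Pasym d)ᴴ = Pasym d := by
  unfold Pasym
  rw [Matrix.conjTranspose_smul, Matrix.conjTranspose_sub, Matrix.conjTranspose_one,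
    flip_conjTranspose]
  norm_num

lemma psym_mul_psym : Psym d * Psym d = Psym d := by
  unfold Psym
  rw [Matrix.smul_mul, Matrix.mul_smul, Matrix.add_mul, Matrix.mul_add, Matrix.mul_add,
    Matrix.one_mul, Matrix.mul_one, Matrix.one_mul, flip_mul_flip]
  rw [smul_smul]
  module

lemma pasym_mul_pasym : Pasym d * Pasym d = Pasym d := by
  unfold Pasym
  rw [Matrix.smul_mul, Matrix.mul_smul, Matrix.sub_mul, Matrix.mul_sub, Matrix.mul_sub,
    Matrix.one_mul, Matrix.mul_one, Matrix.one_mul, flip_mul_flip]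
  rw [smul_smul]
  module

lemma psym_mul_pasym : Psym d * Pasym d = 0 := by
  unfold Psym Pasym
  rw [Matrix.smul_mul, Matrix.mul_smul, Matrix.add_mul, Matrix.mul_sub, Matrix.mul_sub,
    Matrix.one_mul, Matrix.mul_one, Matrix.one_mul, flip_mul_flip]
  rw [smul_smul]
  module

lemma pasym_mul_psym : Pasym d * Psym d = 0 := by
  unfold Psym Pasym
  rw [Matrix.smul_mul, Matrix.mul_smul, Matrix.sub_mul, Matrix.mul_add, Matrix.mul_add,
    Matrix.one_mul, Matrix.mul_one, Matrix.one_mul, flip_mul_flip]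
  rw [smul_smul]
  module

lemma psym_posSemidef : (Psym d).PosSemidef := psd_of_proj psym_conjTranspose psym_mul_psym

lemma pasym_posSemidef : (Pasym d).PosSemidef := psd_of_proj pasym_conjTranspose pasym_mul_pasym

lemma trace_flip : (flipOp d).trace = (d : ℂ) := by
  simp only [Matrix.trace, Matrix.diag, flipOp]
  refine Eq.trans (Finset.sum_congr rfl fun x _ => ?_) sum_diag_one
  exact if_congr ⟨fun h => h.1, fun h => ⟨h, h.symm⟩⟩ rfl rfl

lemma trace_psym : (Psym d).trace = (d : ℂ) * ((d : ℂ) + 1) / 2 := by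
  unfold Psym
  rw [Matrix.trace_smul, Matrix.trace_add, Matrix.trace_one, trace_flip]
  simp [Fintype.card_prod, smul_eq_mul]
  ring

lemma trace_pasym : (Pasym d).trace = (d : ℂ) * ((d : ℂ) - 1) / 2 := by
  unfold Pasym
  rw [Matrix.trace_smul, Matrix.trace_sub, Matrix.trace_one, trace_flip]
  simp [Fintype.card_prod, smul_eq_mul]
  ring

end SiteMatrices
section PtrAux

open Matrix

variable {d : ℕ}

lemma ptranspose_ptranspose {A B : Type} (X : Matrix (A × B) (A × B) ℂ) :
    ptranspose (ptranspose X) = X := rfl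

lemma ptr_psym : ptranspose (Psym d) = (1 / 2 : ℂ) • (1 + Om d) := by
  funext p q
  simp only [ptranspose, Psym, Matrix.smul_apply, Matrix.add_apply, Matrix.one_apply,
    flipOp, Om, smul_eq_mul]
  congr 1
  congr 1
  · refine if_congr ?_ rfl rfl
    rw [Prod.ext_iff, Prod.ext_iff]
    constructor <;> rintro ⟨h1, h2⟩ <;> exact ⟨h1, h2.symm⟩
  · refine if_congr ?_ rfl rfl
    constructor <;> rintro ⟨h1, h2⟩ <;> exact ⟨h1, h2.symm⟩

lemma ptr_pasym : ptranspose (Pasym d) = (1 / 2 : ℂ) • (1 - Om d) := by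
  funext p q
  simp only [ptranspose, Pasym, Matrix.smul_apply, Matrix.sub_apply, Matrix.one_apply,
    flipOp, Om, smul_eq_mul]
  congr 1
  congr 1
  · refine if_congr ?_ rfl rfl
    rw [Prod.ext_iff, Prod.ext_iff]
    constructor <;> rintro ⟨h1, h2⟩ <;> exact ⟨h1, h2.symm⟩
  · refine if_congr ?_ rfl rfl
    constructor <;> rintro ⟨h1, h2⟩ <;> exact ⟨h1, h2.symm⟩

/-- The PSD matrix `d•1 - Ω`. -/
noncomputable def Bzero (d : ℕ) : Matrix (Fin d × Fin d) (Fin d × Fin d) ℂ :=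
  (d : ℂ) • 1 - Om d

lemma bzero_posSemidef (hd : d ≠ 0) : (Bzero d).PosSemidef := by
  have hdc : (d : ℂ) ≠ 0 := Nat.cast_ne_zero.mpr hd
  have hproj : (1 - (d : ℂ)⁻¹ • Om d).PosSemidef := by
    refine psd_of_proj ?_ ?_
    · rw [Matrix.conjTranspose_sub, Matrix.conjTranspose_smul, Matrix.conjTranspose_one,
        om_conjTranspose]
      congr 1
      simp [RCLike.star_def, ← Complex.ofReal_natCast]
    · rw [Matrix.sub_mul, Matrix.one_mul, Matrix.mul_sub, Matrix.mul_one, Matrix.smul_mul,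
        Matrix.mul_smul, om_mul_om, smul_smul, smul_smul]
      have hsc : (d : ℂ)⁻¹ * (d : ℂ)⁻¹ * (d : ℂ) = (d : ℂ)⁻¹ := by field_simp
      rw [hsc]
      abel
  have key : Bzero d = (((d : ℝ)) : ℂ) • (1 - (d : ℂ)⁻¹ • Om d) := by
    unfold Bzero
    rw [smul_sub, smul_smul]
    push_cast
    rw [mul_inv_cancel₀ hdc, one_smul]
  rw [key]
  exact psd_smul hproj (Nat.cast_nonneg d)

/-- Building blocks for the per-site spectral decomposition. -/
noncomputable def Nsite (d : ℕ) : Matrix (Fin d × Fin d) (Fin d × Fin d) ℂ :=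
  (2 * (d : ℂ))⁻¹ • Bzero d

noncomputable def Wsite (d : ℕ) : Matrix (Fin d × Fin d) (Fin d × Fin d) ℂ :=
  (2 * (d : ℂ))⁻¹ • Om d

lemma nsite_posSemidef (hd : d ≠ 0) : (Nsite d).PosSemidef := by
  have : Nsite d = (((2 * (d : ℝ))⁻¹ : ℝ) : ℂ) • Bzero d := by
    unfold Nsite; push_cast; ring_nf
  rw [this]
  exact psd_smul (bzero_posSemidef hd) (by positivity)

lemma wsite_posSemidef (hd : d ≠ 0) : (Wsite d).PosSemidef := by
  have : Wsite d = (((2 * (d : ℝ))⁻¹ : ℝ) : ℂ) • Om d := by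
    unfold Wsite; push_cast; ring_nf
  rw [this]
  exact psd_smul om_posSemidef (by positivity)

lemma ptr_psym_decomp (hd : d ≠ 0) :
    ptranspose (Psym d) = Nsite d + (((d : ℝ) + 1 : ℝ) : ℂ) • Wsite d := by
  have hdc : (2 * (d : ℂ)) ≠ 0 := by
    simp [Nat.cast_ne_zero.mpr hd]
  refine smul_right_injective (Matrix (Fin d × Fin d) (Fin d × Fin d) ℂ) hdc ?_
  show (2 * (d : ℂ)) • ptranspose (Psym d)
      = (2 * (d : ℂ)) • (Nsite d + (((d : ℝ) + 1 : ℝ) : ℂ) • Wsite d)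
  rw [ptr_psym]
  unfold Nsite Wsite Bzero
  push_cast
  match_scalars <;> field_simp <;> ring

lemma ptr_pasym_decomp (hd : d ≠ 0) :
    ptranspose (Pasym d) = Nsite d + ((-((d : ℝ) - 1) : ℝ) : ℂ) • Wsite d := by
  have hdc : (2 * (d : ℂ)) ≠ 0 := by
    simp [Nat.cast_ne_zero.mpr hd]
  refine smul_right_injective (Matrix (Fin d × Fin d) (Fin d × Fin d) ℂ) hdc ?_
  show (2 * (d : ℂ)) • ptranspose (Pasym d)
      = (2 * (d : ℂ)) • (Nsite d + ((-((d : ℝ) - 1) : ℝ) : ℂ) • Wsite d)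
  rw [ptr_pasym]
  unfold Nsite Wsite Bzero
  push_cast
  match_scalars <;> field_simp <;> ring

end PtrAux
section WernerAux

open Matrix

variable {d : ℕ}

lemma dsym_ne_zero (hd : 2 ≤ d) : (d : ℂ) * ((d : ℂ) + 1) / 2 ≠ 0 := by
  have h1 : (d : ℂ) ≠ 0 := Nat.cast_ne_zero.mpr (by omega)
  have h2 : (d : ℂ) + 1 ≠ 0 := by
    have : ((d + 1 : ℕ) : ℂ) ≠ 0 := Nat.cast_ne_zero.mpr (by omega)
    push_cast at this
    exact this
  exact div_ne_zero (mul_ne_zero h1 h2) two_ne_zero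

lemma dasym_ne_zero (hd : 2 ≤ d) : (d : ℂ) * ((d : ℂ) - 1) / 2 ≠ 0 := by
  have h1 : (d : ℂ) ≠ 0 := Nat.cast_ne_zero.mpr (by omega)
  have h2 : (d : ℂ) - 1 ≠ 0 := by
    rw [sub_ne_zero]
    intro hcon
    have : ((d : ℕ) : ℂ) = ((1 : ℕ) : ℂ) := by push_cast; exact hcon
    rw [Nat.cast_inj] at this
    omega
  exact div_ne_zero (mul_ne_zero h1 h2) two_ne_zero

lemma trace_werner_psym (hd : 2 ≤ d) (p : ℝ) :
    (wernerState d p * Psym d).trace = ((p : ℝ) : ℂ) := by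
  unfold wernerState
  rw [Matrix.add_mul, Matrix.smul_mul, Matrix.smul_mul, psym_mul_psym, pasym_mul_psym,
    smul_zero, add_zero, Matrix.trace_smul, trace_psym, smul_eq_mul]
  rw [div_mul_cancel₀ _ (dsym_ne_zero hd)]

lemma trace_werner_pasym (hd : 2 ≤ d) (p : ℝ) :
    (wernerState d p * Pasym d).trace = ((1 - p : ℝ) : ℂ) := by
  unfold wernerState
  rw [Matrix.add_mul, Matrix.smul_mul, Matrix.smul_mul, psym_mul_pasym, pasym_mul_pasym,
    smul_zero, zero_add, Matrix.trace_smul, trace_pasym, smul_eq_mul]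
  rw [div_mul_cancel₀ _ (dasym_ne_zero hd)]

lemma trace_ptr_mul_ptr {A B : Type} [Fintype A] [Fintype B]
    (X Y : Matrix (A × B) (A × B) ℂ) :
    (ptranspose X * ptranspose Y).trace = (X * Y).trace := by
  have lhs : (ptranspose X * ptranspose Y).trace
      = ∑ z : ((A × B) × (A × B)),
          X (z.1.1, z.2.2) (z.2.1, z.1.2) * Y (z.2.1, z.1.2) (z.1.1, z.2.2) := by
    rw [Fintype.sum_prod_type]
    simp only [Matrix.trace, Matrix.diag, Matrix.mul_apply, ptranspose]
  have rhs : (X * Y).trace = ∑ z : ((A × B) × (A × B)), X z.1 z.2 * Y z.2 z.1 := by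
    rw [Fintype.sum_prod_type]
    simp only [Matrix.trace, Matrix.diag, Matrix.mul_apply]
  rw [lhs, rhs]
  have hinv : Function.Involutive
      (fun z : ((A × B) × (A × B)) => (((z.1.1, z.2.2), (z.2.1, z.1.2)) :
        (A × B) × (A × B))) := fun z => rfl
  exact Fintype.sum_equiv hinv.toPerm _ _ fun z => rfl

end WernerAux

section ChoiAux

open Matrix

lemma choi_ofChoi {A B : Type} [Fintype A] [DecidableEq A] [Fintype B]
    (C : Matrix (A × B) (A × B) ℂ) : choi (ofChoi C) = C := by
  funext p q
  simp only [choi, ofChoi, LinearMap.coe_mk, AddHom.coe_mk]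
  show (∑ i : A, ∑ j : A, Matrix.single p.1 q.1 (1:ℂ) i j * C (i, p.2) (j, q.2)) = C p q
  simp [Matrix.single, Matrix.of_apply, ite_and, ite_mul, zero_mul, one_mul,
    Finset.sum_ite_eq]

lemma choi_add {A B : Type} [Fintype A] [DecidableEq A] [Fintype B]
    (T₁ T₂ : Matrix A A ℂ →ₗ[ℂ] Matrix B B ℂ) :
    choi (T₁ + T₂) = choi T₁ + choi T₂ := by
  funext p q
  simp [choi, Matrix.add_apply]

lemma choi_comp_transpose {A B : Type} [Fintype A] [DecidableEq A] [Fintype B]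
    (T : Matrix A A ℂ →ₗ[ℂ] Matrix B B ℂ) :
    choi (transposeMap B ∘ₗ T) = ptranspose (choi T) := by
  funext p q
  simp [choi, transposeMap, ptranspose, Matrix.transpose_apply]

lemma choi_mapTensorFamily {ι κ κ' : Type} [Fintype ι] [DecidableEq ι]
    [Fintype κ] [DecidableEq κ] [Fintype κ']
    (L : ι → (Matrix κ κ ℂ →ₗ[ℂ] Matrix κ' κ' ℂ)) :
    choi (mapTensorFamily L)
      = (tensorFamily (fun t => choi (L t))).submatrix
          (fun p : (ι → κ) × (ι → κ') => fun t => (p.1 t, p.2 t))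
          (fun p : (ι → κ) × (ι → κ') => fun t => (p.1 t, p.2 t)) := by
  funext p q
  simp only [choi, mapTensorFamily, LinearMap.coe_mk, AddHom.coe_mk, Matrix.submatrix_apply,
    tensorFamily]
  show (∑ i : ι → κ, ∑ j : ι → κ, Matrix.single p.1 q.1 (1:ℂ) i j *
      ∏ t, L t (Matrix.single (i t) (j t) 1) (p.2 t) (q.2 t))
    = ∏ t, L t (Matrix.single (p.1 t) (q.1 t) 1) (p.2 t) (q.2 t)
  have hstd : ∀ (i j : ι → κ), Matrix.single p.1 q.1 (1:ℂ) i j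
      = if q.1 = j then (if p.1 = i then (1:ℂ) else 0) else 0 := by
    intro i j
    simp only [Matrix.single, Matrix.of_apply]
    by_cases h1 : p.1 = i <;> by_cases h2 : q.1 = j <;> simp [h1, h2]
  simp only [hstd, ite_mul, zero_mul, one_mul, Finset.sum_ite_eq, Finset.mem_univ, if_true]


end ChoiAux
section IneqAux

open Matrix

variable {d : ℕ}

lemma coef_ineq1 (hd : 2 ≤ d) (j : ℕ) :
    0 ≤ ((d : ℝ) - 1) * ((d : ℝ) + 1) ^ j + ((d : ℝ) + 1) * (-((d : ℝ) - 1)) ^ j := by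
  have hd1 : (1 : ℝ) ≤ (d : ℝ) - 1 := by
    have : (2 : ℝ) ≤ (d : ℝ) := by exact_mod_cast hd
    linarith
  have hx : (0 : ℝ) ≤ (d : ℝ) - 1 := by linarith
  have hy : (0 : ℝ) ≤ (d : ℝ) + 1 := by linarith
  have hxy : (d : ℝ) - 1 ≤ (d : ℝ) + 1 := by linarith
  rcases Nat.even_or_odd j with he | ho
  · rw [he.neg_pow]
    have := pow_nonneg hx j
    have := pow_nonneg hy j
    nlinarith
  · rw [ho.neg_pow]
    obtain ⟨k, rfl⟩ := ho
    have hpow : ((d : ℝ) - 1) ^ (2 * k) ≤ ((d : ℝ) + 1) ^ (2 * k) := pow_le_pow_left₀ hx hxy _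
    have e1 : ((d : ℝ) - 1) ^ (2 * k + 1) = ((d : ℝ) - 1) * ((d : ℝ) - 1) ^ (2 * k) := by ring
    have e2 : ((d : ℝ) + 1) ^ (2 * k + 1) = ((d : ℝ) + 1) * ((d : ℝ) + 1) ^ (2 * k) := by ring
    rw [e1, e2]
    nlinarith [mul_le_mul_of_nonneg_left hpow (mul_nonneg hx hy)]

lemma coef_ineq2 (hd : 2 ≤ d) (j : ℕ) :
    0 ≤ ((d : ℝ) + 1) * ((d : ℝ) + 1) ^ j + (-((d : ℝ) + 1)) * (-((d : ℝ) - 1)) ^ j := by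
  have hd1 : (1 : ℝ) ≤ (d : ℝ) - 1 := by
    have : (2 : ℝ) ≤ (d : ℝ) := by exact_mod_cast hd
    linarith
  have hx : (0 : ℝ) ≤ (d : ℝ) - 1 := by linarith
  have hy : (0 : ℝ) ≤ (d : ℝ) + 1 := by linarith
  have hxy : (d : ℝ) - 1 ≤ (d : ℝ) + 1 := by linarith
  have habs : (-((d : ℝ) - 1)) ^ j ≤ ((d : ℝ) + 1) ^ j := by
    calc (-((d : ℝ) - 1)) ^ j ≤ |(-((d : ℝ) - 1)) ^ j| := le_abs_self _
      _ = |(-((d : ℝ) - 1))| ^ j := by rw [abs_pow]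
      _ = ((d : ℝ) - 1) ^ j := by rw [abs_neg, abs_of_nonneg hx]
      _ ≤ ((d : ℝ) + 1) ^ j := pow_le_pow_left₀ hx hxy _
  nlinarith [pow_nonneg hy j]

/-- Product of an `ite` over a sum type, supported on the right summand. -/
lemma prod_ite_elim_inr {n : ℕ} (g : (Fin n ⊕ Fin n) → Bool) (c : ℝ) :
    (∏ t : Fin n ⊕ Fin n,
        if g t then (Sum.elim (fun _ => (1 : ℝ)) (fun _ => c) t) else 1)
      = c ^ (Finset.univ.filter (fun s : Fin n => g (Sum.inr s) = true)).card := by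
  rw [Fintype.prod_sum_type]
  simp only [Sum.elim_inl, Sum.elim_inr, ite_self, Finset.prod_const_one, one_mul]
  rw [← Finset.prod_filter_mul_prod_filter_not Finset.univ
    (fun s : Fin n => g (Sum.inr s) = true)]
  rw [Finset.prod_congr rfl (fun s hs => if_pos (Finset.mem_filter.mp hs).2),
    Finset.prod_const]
  rw [Finset.prod_congr rfl (fun s hs => if_neg (by
    simpa using (Finset.mem_filter.mp hs).2)), Finset.prod_const_one, mul_one]

lemma prod_ite_elim_inl {n : ℕ} (g : (Fin n ⊕ Fin n) → Bool) (c : ℝ) :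
    (∏ t : Fin n ⊕ Fin n,
        if g t then (Sum.elim (fun _ => c) (fun _ => (1 : ℝ)) t) else 1)
      = c ^ (Finset.univ.filter (fun s : Fin n => g (Sum.inl s) = true)).card := by
  rw [Fintype.prod_sum_type]
  simp only [Sum.elim_inl, Sum.elim_inr, ite_self, Finset.prod_const_one, mul_one]
  rw [← Finset.prod_filter_mul_prod_filter_not Finset.univ
    (fun s : Fin n => g (Sum.inl s) = true)]
  rw [Finset.prod_congr rfl (fun s hs => if_pos (Finset.mem_filter.mp hs).2),
    Finset.prod_const]
  rw [Finset.prod_congr rfl (fun s hs => if_neg (by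
    simpa using (Finset.mem_filter.mp hs).2)), Finset.prod_const_one, mul_one]

end IneqAux

section ReductionAux

open Matrix

/-- The key reduction: a PPT "witness" with negative pairing rules out decomposability. -/
lemma not_decomposable_of_witness {A : Type} [Fintype A] [DecidableEq A]
    (P : Matrix A A ℂ →ₗ[ℂ] Matrix A A ℂ) (H : Matrix (A × A) (A × A) ℂ) (hH : H.PosSemidef)
    (hHt : (ptranspose H).PosSemidef)
    (hneg : ¬ (0 ≤ ((choi P * H).trace))) : ¬ IsDecomposable P := by
  rintro ⟨T₁, T₂, h1, h2, heq⟩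
  apply hneg
  rw [heq, choi_add, choi_comp_transpose, Matrix.add_mul, Matrix.trace_add]
  have A1 : 0 ≤ (choi T₁ * H).trace := trace_mul_psd_nonneg h1 hH
  have A2 : 0 ≤ (ptranspose (choi T₂) * H).trace := by
    have key := trace_ptr_mul_ptr (choi T₂) (ptranspose H)
    rw [ptranspose_ptranspose] at key
    rw [key]
    exact trace_mul_psd_nonneg h2 hHt
  exact add_nonneg A1 A2

lemma ptransposeAll_tensorFamily {ι A B : Type} [Fintype ι]
    (M : ι → Matrix (A × B) (A × B) ℂ) :
    ptransposeAll (tensorFamily M) = tensorFamily (fun t => ptranspose (M t)) := rfl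

lemma ptranspose_submatrix_arrow {ι A B : Type} [Fintype ι]
    (X : Matrix (ι → A × B) (ι → A × B) ℂ) :
    ptranspose (X.submatrix
        (fun p : (ι → A) × (ι → B) => fun t => (p.1 t, p.2 t))
        (fun p : (ι → A) × (ι → B) => fun t => (p.1 t, p.2 t)))
      = (ptransposeAll X).submatrix
          (fun p : (ι → A) × (ι → B) => fun t => (p.1 t, p.2 t))
          (fun p : (ι → A) × (ι → B) => fun t => (p.1 t, p.2 t)) := rfl

end ReductionAux
section WitnessAux

open Matrix

/-- Tensor product matrix with `x` on the first `n` sites and `y` on the last `n` sites. -/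
noncomputable def TTmat (d n : ℕ)
    (x y : Matrix (Fin d × Fin d) (Fin d × Fin d) ℂ) :
    Matrix ((Fin n ⊕ Fin n) → Fin d × Fin d) ((Fin n ⊕ Fin n) → Fin d × Fin d) ℂ :=
  tensorFamily (Sum.elim (fun _ => x) (fun _ => y))

/-- The entanglement witness (before reindexing). -/
noncomputable def Htilde (d n : ℕ) :
    Matrix ((Fin n ⊕ Fin n) → Fin d × Fin d) ((Fin n ⊕ Fin n) → Fin d × Fin d) ℂ :=
  (((d : ℝ) - 1 : ℝ) : ℂ) • TTmat d n (Psym d) (ptranspose (Psym d))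
    + (((d : ℝ) + 1 : ℝ) : ℂ) • TTmat d n (Psym d) (ptranspose (Pasym d))
    + (((d : ℝ) + 1 : ℝ) : ℂ) • TTmat d n (Pasym d) (ptranspose (Psym d))
    + ((-((d : ℝ) + 1) : ℝ) : ℂ) • TTmat d n (Pasym d) (ptranspose (Pasym d))

lemma TTmat_eq_decomp_right (d n : ℕ) (hd : d ≠ 0)
    (x : Matrix (Fin d × Fin d) (Fin d × Fin d) ℂ) (c : ℝ)
    (y : Matrix (Fin d × Fin d) (Fin d × Fin d) ℂ)
    (hy : y = Nsite d + ((c : ℝ) : ℂ) • Wsite d) :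
    TTmat d n x y = tensorFamily (fun t : Fin n ⊕ Fin n =>
      (Sum.elim (fun _ => x) (fun _ => Nsite d) t)
        + (((Sum.elim (fun _ => (1 : ℝ)) (fun _ => c) t : ℝ)) : ℂ) •
          (Sum.elim (fun _ => (0 : Matrix (Fin d × Fin d) (Fin d × Fin d) ℂ))
            (fun _ => Wsite d) t)) := by
  unfold TTmat
  refine congrArg tensorFamily (funext fun t => ?_)
  cases t with
  | inl s => simp
  | inr s => simpa using hy

lemma TTmat_eq_decomp_left (d n : ℕ) (hd : d ≠ 0)
    (c : ℝ) (x : Matrix (Fin d × Fin d) (Fin d × Fin d) ℂ)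
    (hx : x = Nsite d + ((c : ℝ) : ℂ) • Wsite d)
    (y : Matrix (Fin d × Fin d) (Fin d × Fin d) ℂ) :
    TTmat d n x y = tensorFamily (fun t : Fin n ⊕ Fin n =>
      (Sum.elim (fun _ => Nsite d) (fun _ => y) t)
        + (((Sum.elim (fun _ => c) (fun _ => (1 : ℝ)) t : ℝ)) : ℂ) •
          (Sum.elim (fun _ => Wsite d)
            (fun _ => (0 : Matrix (Fin d × Fin d) (Fin d × Fin d) ℂ)) t)) := by
  unfold TTmat
  refine congrArg tensorFamily (funext fun t => ?_)
  cases t with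
  | inl s => simpa using hx
  | inr s => simp

lemma htilde_posSemidef (d n : ℕ) (hd : 2 ≤ d) : (Htilde d n).PosSemidef := by
  have hd0 : d ≠ 0 := by omega
  have hblock1 : ((((d : ℝ) - 1 : ℝ) : ℂ) • TTmat d n (Psym d) (ptranspose (Psym d))
      + (((d : ℝ) + 1 : ℝ) : ℂ) • TTmat d n (Psym d) (ptranspose (Pasym d))).PosSemidef := by
    rw [TTmat_eq_decomp_right d n hd0 (Psym d) ((d : ℝ) + 1) _ (by
        rw [ptr_psym_decomp hd0]),
      TTmat_eq_decomp_right d n hd0 (Psym d) (-((d : ℝ) - 1)) _ (by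
        rw [ptr_pasym_decomp hd0])]
    refine L1 _ _ (fun t => ?_) (fun t => ?_) ((d : ℝ) - 1) ((d : ℝ) + 1) _ _ (fun g => ?_)
    · cases t with
      | inl s => exact psym_posSemidef
      | inr s => exact nsite_posSemidef hd0
    · cases t with
      | inl s => exact Matrix.PosSemidef.zero
      | inr s => exact wsite_posSemidef hd0
    · rw [prod_ite_elim_inr g ((d : ℝ) + 1), prod_ite_elim_inr g (-((d : ℝ) - 1))]
      exact coef_ineq1 hd _
  have hblock2 : ((((d : ℝ) + 1 : ℝ) : ℂ) • TTmat d n (Pasym d) (ptranspose (Psym d))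
      + ((-((d : ℝ) + 1) : ℝ) : ℂ) • TTmat d n (Pasym d) (ptranspose (Pasym d))).PosSemidef := by
    rw [TTmat_eq_decomp_right d n hd0 (Pasym d) ((d : ℝ) + 1) _ (by
        rw [ptr_psym_decomp hd0]),
      TTmat_eq_decomp_right d n hd0 (Pasym d) (-((d : ℝ) - 1)) _ (by
        rw [ptr_pasym_decomp hd0])]
    refine L1 _ _ (fun t => ?_) (fun t => ?_) ((d : ℝ) + 1) (-((d : ℝ) + 1)) _ _ (fun g => ?_)
    · cases t with
      | inl s => exact pasym_posSemidef
      | inr s => exact nsite_posSemidef hd0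
    · cases t with
      | inl s => exact Matrix.PosSemidef.zero
      | inr s => exact wsite_posSemidef hd0
    · rw [prod_ite_elim_inr g ((d : ℝ) + 1), prod_ite_elim_inr g (-((d : ℝ) - 1))]
      exact coef_ineq2 hd _
  have key : Htilde d n
      = ((((d : ℝ) - 1 : ℝ) : ℂ) • TTmat d n (Psym d) (ptranspose (Psym d))
          + (((d : ℝ) + 1 : ℝ) : ℂ) • TTmat d n (Psym d) (ptranspose (Pasym d)))
        + ((((d : ℝ) + 1 : ℝ) : ℂ) • TTmat d n (Pasym d) (ptranspose (Psym d))
          + ((-((d : ℝ) + 1) : ℝ) : ℂ) • TTmat d n (Pasym d) (ptranspose (Pasym d))) := by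
    unfold Htilde
    abel
  rw [key]
  exact hblock1.add hblock2

lemma ptransposeAll_htilde (d n : ℕ) :
    ptransposeAll (Htilde d n)
      = (((d : ℝ) - 1 : ℝ) : ℂ) • TTmat d n (ptranspose (Psym d)) (Psym d)
        + (((d : ℝ) + 1 : ℝ) : ℂ) • TTmat d n (ptranspose (Psym d)) (Pasym d)
        + (((d : ℝ) + 1 : ℝ) : ℂ) • TTmat d n (ptranspose (Pasym d)) (Psym d)
        + ((-((d : ℝ) + 1) : ℝ) : ℂ) • TTmat d n (ptranspose (Pasym d)) (Pasym d) := by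
  have hTT : ∀ x y : Matrix (Fin d × Fin d) (Fin d × Fin d) ℂ,
      ptransposeAll (TTmat d n x y) = TTmat d n (ptranspose x) (ptranspose y) := by
    intro x y
    unfold TTmat
    rw [ptransposeAll_tensorFamily]
    refine congrArg tensorFamily (funext fun t => ?_)
    cases t <;> rfl
  have hlin : ∀ (a b c e : ℂ)
      (X Y Z W : Matrix ((Fin n ⊕ Fin n) → Fin d × Fin d)
        ((Fin n ⊕ Fin n) → Fin d × Fin d) ℂ),
      ptransposeAll (a • X + b • Y + c • Z + e • W)
        = a • ptransposeAll X + b • ptransposeAll Y + c • ptransposeAll Z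
          + e • ptransposeAll W := by
    intro a b c e X Y Z W
    funext p q
    simp [ptransposeAll, Matrix.add_apply, Matrix.smul_apply]
  unfold Htilde
  rw [hlin, hTT, hTT, hTT, hTT, ptranspose_ptranspose, ptranspose_ptranspose]

lemma ptransposeAll_htilde_posSemidef (d n : ℕ) (hd : 2 ≤ d) :
    (ptransposeAll (Htilde d n)).PosSemidef := by
  have hd0 : d ≠ 0 := by omega
  rw [ptransposeAll_htilde]
  have hblock1 : ((((d : ℝ) - 1 : ℝ) : ℂ) • TTmat d n (ptranspose (Psym d)) (Psym d)
      + (((d : ℝ) + 1 : ℝ) : ℂ) • TTmat d n (ptranspose (Pasym d)) (Psym d)).PosSemidef := by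
    rw [TTmat_eq_decomp_left d n hd0 ((d : ℝ) + 1) _ (by rw [ptr_psym_decomp hd0]) (Psym d),
      TTmat_eq_decomp_left d n hd0 (-((d : ℝ) - 1)) _ (by rw [ptr_pasym_decomp hd0]) (Psym d)]
    refine L1 _ _ (fun t => ?_) (fun t => ?_) ((d : ℝ) - 1) ((d : ℝ) + 1) _ _ (fun g => ?_)
    · cases t with
      | inl s => exact nsite_posSemidef hd0
      | inr s => exact psym_posSemidef
    · cases t with
      | inl s => exact wsite_posSemidef hd0
      | inr s => exact Matrix.PosSemidef.zero
    · rw [prod_ite_elim_inl g ((d : ℝ) + 1), prod_ite_elim_inl g (-((d : ℝ) - 1))]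
      exact coef_ineq1 hd _
  have hblock2 : ((((d : ℝ) + 1 : ℝ) : ℂ) • TTmat d n (ptranspose (Psym d)) (Pasym d)
      + ((-((d : ℝ) + 1) : ℝ) : ℂ) • TTmat d n (ptranspose (Pasym d)) (Pasym d)).PosSemidef := by
    rw [TTmat_eq_decomp_left d n hd0 ((d : ℝ) + 1) _ (by rw [ptr_psym_decomp hd0]) (Pasym d),
      TTmat_eq_decomp_left d n hd0 (-((d : ℝ) - 1)) _ (by rw [ptr_pasym_decomp hd0]) (Pasym d)]
    refine L1 _ _ (fun t => ?_) (fun t => ?_) ((d : ℝ) + 1) (-((d : ℝ) + 1)) _ _ (fun g => ?_)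
    · cases t with
      | inl s => exact nsite_posSemidef hd0
      | inr s => exact pasym_posSemidef
    · cases t with
      | inl s => exact wsite_posSemidef hd0
      | inr s => exact Matrix.PosSemidef.zero
    · rw [prod_ite_elim_inl g ((d : ℝ) + 1), prod_ite_elim_inl g (-((d : ℝ) - 1))]
      exact coef_ineq2 hd _
  have key : (((d : ℝ) - 1 : ℝ) : ℂ) • TTmat d n (ptranspose (Psym d)) (Psym d)
        + (((d : ℝ) + 1 : ℝ) : ℂ) • TTmat d n (ptranspose (Psym d)) (Pasym d)
        + (((d : ℝ) + 1 : ℝ) : ℂ) • TTmat d n (ptranspose (Pasym d)) (Psym d)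
        + ((-((d : ℝ) + 1) : ℝ) : ℂ) • TTmat d n (ptranspose (Pasym d)) (Pasym d)
      = ((((d : ℝ) - 1 : ℝ) : ℂ) • TTmat d n (ptranspose (Psym d)) (Psym d)
          + (((d : ℝ) + 1 : ℝ) : ℂ) • TTmat d n (ptranspose (Pasym d)) (Psym d))
        + ((((d : ℝ) + 1 : ℝ) : ℂ) • TTmat d n (ptranspose (Psym d)) (Pasym d)
          + ((-((d : ℝ) + 1) : ℝ) : ℂ) • TTmat d n (ptranspose (Pasym d)) (Pasym d)) := by
    abel
  rw [key]
  exact hblock1.add hblock2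

end WitnessAux
section PairingAux

open Matrix

lemma trace_TT (d n : ℕ) (hd : 2 ≤ d) (p₁ p₂ : ℝ)
    (x y : Matrix (Fin d × Fin d) (Fin d × Fin d) ℂ) :
    (tensorFamily (Sum.elim (fun _ : Fin n => wernerState d p₁)
        (fun _ : Fin n => ptranspose (wernerState d p₂))) * TTmat d n x y).trace
      = ((wernerState d p₁ * x).trace) ^ n
        * ((ptranspose (wernerState d p₂) * y).trace) ^ n := by
  unfold TTmat
  rw [trace_tensorFamily_mul]
  rw [Fintype.prod_sum_type]
  simp only [Sum.elim_inl, Sum.elim_inr, Finset.prod_const, Finset.card_univ,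
    Fintype.card_fin]

lemma pairing (d n : ℕ) (hd : 2 ≤ d) (p₁ p₂ : ℝ) :
    (tensorFamily (Sum.elim (fun _ : Fin n => wernerState d p₁)
        (fun _ : Fin n => ptranspose (wernerState d p₂))) * Htilde d n).trace
      = ((((d : ℝ) - 1) * (p₁ ^ n * p₂ ^ n) + ((d : ℝ) + 1) * (p₁ ^ n * (1 - p₂) ^ n)
          + ((d : ℝ) + 1) * ((1 - p₁) ^ n * p₂ ^ n)
          - ((d : ℝ) + 1) * ((1 - p₁) ^ n * (1 - p₂) ^ n) : ℝ) : ℂ) := by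
  unfold Htilde
  rw [Matrix.mul_add, Matrix.mul_add, Matrix.mul_add, Matrix.trace_add, Matrix.trace_add,
    Matrix.trace_add, Matrix.mul_smul, Matrix.mul_smul, Matrix.mul_smul, Matrix.mul_smul,
    Matrix.trace_smul, Matrix.trace_smul, Matrix.trace_smul, Matrix.trace_smul]
  rw [trace_TT d n hd p₁ p₂, trace_TT d n hd p₁ p₂, trace_TT d n hd p₁ p₂,
    trace_TT d n hd p₁ p₂]
  rw [trace_ptr_mul_ptr, trace_ptr_mul_ptr]
  rw [trace_werner_psym hd p₁, trace_werner_pasym hd p₁, trace_werner_psym hd p₂,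
    trace_werner_pasym hd p₂]
  push_cast
  simp only [smul_eq_mul]
  ring

end PairingAux
theorem stmt14 (d n : ℕ) (hd : 2 ≤ d) (p₁ p₂ : ℝ)
    (h₁ : p₁ ∈ Set.Icc (0 : ℝ) 1) (h₂ : p₂ ∈ Set.Icc (0 : ℝ) 1)
    (h : ((d : ℝ) - 1) / ((d : ℝ) + 1) * (p₁ ^ n * p₂ ^ n) + (1 - p₁) ^ n * p₂ ^ n
        + p₁ ^ n * (1 - p₂) ^ n - (1 - p₁) ^ n * (1 - p₂) ^ n < 0) :
    ¬ IsDecomposable (wernerMixed d n n p₁ p₂) := by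
  classical
  have hd0 : d ≠ 0 := by omega
  set E : (((Fin n ⊕ Fin n) → Fin d) × ((Fin n ⊕ Fin n) → Fin d))
      ≃ ((Fin n ⊕ Fin n) → Fin d × Fin d) :=
    (Equiv.arrowProdEquivProdArrow (Fin n ⊕ Fin n) (fun _ => Fin d) (fun _ => Fin d)).symm with hE
  have hEfun : ⇑E = (fun p : ((Fin n ⊕ Fin n) → Fin d) × ((Fin n ⊕ Fin n) → Fin d) =>
      fun t => (p.1 t, p.2 t)) := rfl
  apply not_decomposable_of_witness (wernerMixed d n n p₁ p₂)
    ((Htilde d n).submatrix E E)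
  · exact (htilde_posSemidef d n hd).submatrix E
  · rw [hEfun, ptranspose_submatrix_arrow]
    exact (ptransposeAll_htilde_posSemidef d n hd).submatrix _
  · have hchoi : choi (wernerMixed d n n p₁ p₂)
        = (tensorFamily (Sum.elim (fun _ : Fin n => wernerState d p₁)
            (fun _ : Fin n => ptranspose (wernerState d p₂)))).submatrix E E := by
      unfold wernerMixed
      rw [choi_mapTensorFamily]
      rw [hEfun]
      refine congrArg (fun M : Matrix ((Fin n ⊕ Fin n) → Fin d × Fin d)
          ((Fin n ⊕ Fin n) → Fin d × Fin d) ℂ =>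
        M.submatrix
          (fun p : ((Fin n ⊕ Fin n) → Fin d) × ((Fin n ⊕ Fin n) → Fin d) =>
            fun t => (p.1 t, p.2 t))
          (fun p : ((Fin n ⊕ Fin n) → Fin d) × ((Fin n ⊕ Fin n) → Fin d) =>
            fun t => (p.1 t, p.2 t))) ?_
      refine congrArg tensorFamily (funext fun t => ?_)
      cases t with
      | inl s =>
        show choi (wernerMap d p₁) = wernerState d p₁
        exact choi_ofChoi _
      | inr s =>
        show choi (transposeMap (Fin d) ∘ₗ wernerMap d p₂) = ptranspose (wernerState d p₂)
        rw [choi_comp_transpose]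
        exact congrArg ptranspose (choi_ofChoi _)
    rw [hchoi, my_trace_submatrix_mul, pairing d n hd]
    intro hcon
    rw [Complex.zero_le_real] at hcon
    have hfact : ((d : ℝ) - 1) * (p₁ ^ n * p₂ ^ n) + ((d : ℝ) + 1) * (p₁ ^ n * (1 - p₂) ^ n)
          + ((d : ℝ) + 1) * ((1 - p₁) ^ n * p₂ ^ n)
          - ((d : ℝ) + 1) * ((1 - p₁) ^ n * (1 - p₂) ^ n)
        = ((d : ℝ) + 1) * (((d : ℝ) - 1) / ((d : ℝ) + 1) * (p₁ ^ n * p₂ ^ n)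
            + (1 - p₁) ^ n * p₂ ^ n + p₁ ^ n * (1 - p₂) ^ n
            - (1 - p₁) ^ n * (1 - p₂) ^ n) := by
      have hdp : (d : ℝ) + 1 ≠ 0 := by positivity
      field_simp
      ring
    rw [hfact] at hcon
    have hdpos : (0 : ℝ) < (d : ℝ) + 1 := by positivity
    nlinarith

end TensorDecomp
end
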